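/- Let V be a locally-convex topological vector space, C a convex subset, p ∈ C, v ∈ V. Suppose v and C are contained in a subset X of V whose subspace topology is induced by a norm, and X contains the intersection of the tangent cone of C at p with an open neighborhood of v. Then there exists a curve c : [0,∞) → C with c(0) = p and right derivative v at 0 if and only if θ(v) ≥ 0 for all θ ∈ V* attaining their minimum over C at p. -/

import Mathlib

open Filter Topology Set

/-! If every functional minimised over `C` at `p` is nonnegative at `v`, Hahn–Banach puts `v` in
the closure of the convex cone of feasible directions `{w | ∃ t > 0, p + t • w ∈ C}`. Near `v`
this cone lies in `X`, where `v` has a countable neighbourhood basis, so `v` is the limit of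
feasible directions `w n`. Choose times `t n ↓ 0` such that `p + s • w n` and `p + s • w (n + 1)`
lie in `C` for `s ≤ t n`, and let `γ` interpolate linearly between the values `w n` at the times
`t n`. The curve `s ↦ p + s • γ s` then stays in `C`, and its difference quotient `γ s` tends to
`v` because `v` has a basis of convex neighbourhoods. Conversely, `θ v ≥ 0` is the limit of
`θ (c t - p) / t ≥ 0`. -/

lemma pos_of_strictAnti_of_tendsto_zero {t : ℕ → ℝ} (ht : StrictAnti t)
    (h0 : Tendsto t atTop (𝓝 0)) (n : ℕ) : 0 < t n :=
  (ht.antitone.le_of_tendsto h0 (n + 1)).trans_lt (ht (lt_add_one n))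

lemma exists_strictAnti_tendsto_zero_le {a : ℕ → ℝ} (ha : ∀ n, 0 < a n) :
    ∃ t : ℕ → ℝ, StrictAnti t ∧ (∀ n, t n ≤ a n) ∧ Tendsto t atTop (𝓝 0) := by
  let t : ℕ → ℝ := fun n => Nat.rec (a 0) (fun n tn => min (a (n + 1)) (tn / 2)) n
  have ht_succ (n : ℕ) : t (n + 1) = min (a (n + 1)) (t n / 2) := rfl
  have ht_pos (n : ℕ) : 0 < t n := by
    induction n with
    | zero => exact ha 0
    | succ n ih => rw [ht_succ]; exact lt_min (ha _) (half_pos ih)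
  have ht_half (n : ℕ) : t (n + 1) ≤ t n / 2 := by rw [ht_succ]; exact min_le_right _ _
  have ht_geom (n : ℕ) : t n ≤ a 0 * (1 / 2) ^ n := by
    induction n with
    | zero => simp [t]
    | succ n ih => rw [pow_succ]; linarith [ht_half n]
  refine ⟨t, strictAnti_nat_of_succ_lt fun n => by linarith [ht_half n, ht_pos n], ?_, ?_⟩
  · rintro (_ | n)
    · exact le_rfl
    · rw [ht_succ]; exact min_le_left _ _
  · have hgeom : Tendsto (fun n : ℕ => a 0 * (1 / 2 : ℝ) ^ n) atTop (𝓝 0) := by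
      simpa using (tendsto_pow_atTop_nhds_zero_of_lt_one (r := (1 / 2 : ℝ)) (by norm_num)
        (by norm_num)).const_mul (a 0)
    exact tendsto_of_tendsto_of_tendsto_of_le_of_le tendsto_const_nhds hgeom
      (fun n => (ht_pos n).le) ht_geom

lemma exists_le_le_of_tendsto_zero {t : ℕ → ℝ} (h0 : Tendsto t atTop (𝓝 0)) {s : ℝ}
    (hs : 0 < s) (hst : s ≤ t 0) : ∃ n, t (n + 1) ≤ s ∧ s ≤ t n := by
  classical
  have hex : ∃ n, t (n + 1) ≤ s :=
    (((tendsto_add_atTop_iff_nat 1).2 h0).eventually (eventually_le_nhds hs)).exists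
  refine ⟨Nat.find hex, Nat.find_spec hex, ?_⟩
  rcases h : Nat.find hex with _ | k
  · exact hst
  · exact le_of_not_ge (Nat.find_min hex (by omega))

lemma exists_seq_tendsto_of_mem_closure {α : Type*} [TopologicalSpace α] {S X : Set α} {x : α}
    (hx : x ∈ closure S) (hSX : S ⊆ X) [(𝓝[X] x).IsCountablyGenerated] :
    ∃ u : ℕ → α, (∀ n, u n ∈ S) ∧ Tendsto u atTop (𝓝 x) := by
  have : (𝓝[S] x).IsCountablyGenerated := by
    rw [← inter_eq_right.2 hSX, nhdsWithin_inter']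
    infer_instance
  have : (𝓝[S] x).NeBot := mem_closure_iff_nhdsWithin_neBot.1 hx
  obtain ⟨u, hu⟩ := exists_seq_tendsto (𝓝[S] x)
  obtain ⟨hux, huS⟩ := tendsto_nhdsWithin_iff.1 hu
  obtain ⟨N, hN⟩ := eventually_atTop.1 huS
  exact ⟨fun n => u (n + N), fun n => hN _ (by omega), (tendsto_add_atTop_iff_nat N).2 hux⟩

lemma isCountablyGenerated_of_forall_mem_iff {α : Type*} {l : Filter α} {B : ℝ → Set α}
    (hB : Monotone B) (h : ∀ S, S ∈ l ↔ ∃ ε > 0, B ε ⊆ S) : l.IsCountablyGenerated := by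
  have hl : l.HasBasis (0 < ·) B := ⟨h⟩
  refine (hl.to_hasBasis (p' := fun _ : ℕ => True) (s' := fun n => B (1 / (n + 1)))
    (fun ε hε => ?_) (fun n _ => ⟨1 / (n + 1), by positivity, subset_rfl⟩)).isCountablyGenerated
  obtain ⟨n, hn⟩ := exists_nat_one_div_lt hε
  exact ⟨n, trivial, hB hn.le⟩

section Interpolation

noncomputable def ramp (a b s : ℝ) : ℝ := max 0 (min 1 ((s - a) / (b - a)))

lemma ramp_of_le {a b s : ℝ} (hab : a ≤ b) (h : s ≤ a) : ramp a b s = 0 :=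
  max_eq_left (min_le_of_right_le (div_nonpos_of_nonpos_of_nonneg (by linarith) (by linarith)))

lemma ramp_of_ge {a b s : ℝ} (hab : a < b) (h : b ≤ s) : ramp a b s = 1 := by
  have : 1 ≤ (s - a) / (b - a) := (one_le_div (by linarith)).2 (by linarith)
  simp [ramp, min_eq_left this]

lemma ramp_mem_Icc (a b s : ℝ) : ramp a b s ∈ Icc 0 1 :=
  ⟨le_max_left _ _, max_le zero_le_one (min_le_left _ _)⟩

lemma continuous_ramp (a b : ℝ) : Continuous (ramp a b) := by
  unfold ramp
  fun_prop

variable {E : Type*} [AddCommGroup E] [Module ℝ E]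

/-- For strictly decreasing `t`, `linearInterp t w` is affine on each `[t (n + 1), t n]`, takes the
value `w n` at `t n` and equals `w 0` on `[t 0, ∞)`. On `[t N, ∞)` all ramps of index `≥ N` equal
`1`, so there it agrees with the finite telescoping sum `linearInterpTrunc t w N`. -/
noncomputable def linearInterpTrunc (t : ℕ → ℝ) (w : ℕ → E) (N : ℕ) (s : ℝ) : E :=
  w N + ∑ k ∈ Finset.range N, ramp (t (k + 1)) (t k) s • (w k - w (k + 1))

open Classical in
noncomputable def linearInterp (t : ℕ → ℝ) (w : ℕ → E) (s : ℝ) : E :=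
  if h : ∃ N, t N ≤ s then linearInterpTrunc t w h.choose s else w 0

variable {t : ℕ → ℝ} {w : ℕ → E} {s : ℝ}

lemma linearInterpTrunc_succ (ht : StrictAnti t) {N : ℕ} (h : t N ≤ s) :
    linearInterpTrunc t w (N + 1) s = linearInterpTrunc t w N s := by
  rw [linearInterpTrunc, linearInterpTrunc, Finset.sum_range_succ,
    ramp_of_ge (ht (lt_add_one N)) h, one_smul]
  abel

lemma linearInterpTrunc_eq_of_le (ht : StrictAnti t) {N M : ℕ} (hN : t N ≤ s) (hNM : N ≤ M) :
    linearInterpTrunc t w M s = linearInterpTrunc t w N s := by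
  induction M, hNM using Nat.le_induction with
  | base => rfl
  | succ M hNM ih => rw [linearInterpTrunc_succ ht ((ht.antitone hNM).trans hN), ih]

lemma linearInterp_eq (ht : StrictAnti t) {N : ℕ} (hN : t N ≤ s) :
    linearInterp t w s = linearInterpTrunc t w N s := by
  have h : ∃ N, t N ≤ s := ⟨N, hN⟩
  rw [linearInterp, dif_pos h]
  rcases le_total h.choose N with hle | hle
  · exact (linearInterpTrunc_eq_of_le ht h.choose_spec hle).symm
  · exact linearInterpTrunc_eq_of_le ht hN hle

lemma linearInterp_of_le (ht : StrictAnti t) (h : t 0 ≤ s) : linearInterp t w s = w 0 := by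
  simp [linearInterp_eq ht h, linearInterpTrunc]

lemma linearInterp_mem_segment (ht : StrictAnti t) {n : ℕ} (h₁ : t (n + 1) ≤ s) (h₂ : s ≤ t n) :
    linearInterp t w s ∈ segment ℝ (w (n + 1)) (w n) := by
  have hzero : ∀ k ∈ Finset.range n, ramp (t (k + 1)) (t k) s • (w k - w (k + 1)) = 0 :=
    fun k hk => by
      rw [ramp_of_le (ht.antitone k.le_succ)
        (h₂.trans (ht.antitone (Finset.mem_range.1 hk))), zero_smul]
  rw [linearInterp_eq ht h₁, linearInterpTrunc, Finset.sum_range_succ, Finset.sum_eq_zero hzero,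
    zero_add, segment_eq_image']
  exact ⟨_, ramp_mem_Icc _ _ _, rfl⟩

lemma tendsto_linearInterp [TopologicalSpace E] [LocallyConvexSpace ℝ E] (ht : StrictAnti t)
    (h0 : Tendsto t atTop (𝓝 0)) {v : E} (hw : Tendsto w atTop (𝓝 v)) :
    Tendsto (linearInterp t w) (𝓝[>] 0) (𝓝 v) := by
  refine (LocallyConvexSpace.convex_basis (𝕜 := ℝ) v).tendsto_right_iff.2 fun U ⟨hU, hUc⟩ => ?_
  obtain ⟨m, hm⟩ := eventually_atTop.1 (hw hU)
  filter_upwards [Ioo_mem_nhdsGT (pos_of_strictAnti_of_tendsto_zero ht h0 m)] with s hs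
  obtain ⟨n, h₁, h₂⟩ :=
    exists_le_le_of_tendsto_zero h0 hs.1 (hs.2.le.trans (ht.antitone m.zero_le))
  have hmn : m ≤ n := by
    by_contra! hnm
    exact (ht.antitone hnm).not_gt (h₁.trans_lt hs.2)
  exact hUc.segment_subset (hm _ (by omega)) (hm n hmn) (linearInterp_mem_segment ht h₁ h₂)

variable [TopologicalSpace E] [IsTopologicalAddGroup E] [ContinuousSMul ℝ E]

lemma continuous_linearInterpTrunc (t : ℕ → ℝ) (w : ℕ → E) (N : ℕ) :
    Continuous (linearInterpTrunc t w N) :=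
  continuous_const.add <| continuous_finsetSum _ fun _ _ =>
    (continuous_ramp _ _).smul continuous_const

lemma continuousOn_linearInterp (ht : StrictAnti t) (h0 : Tendsto t atTop (𝓝 0)) :
    ContinuousOn (linearInterp t w) (Ioi 0) := by
  intro s hs
  obtain ⟨N, hN⟩ := (h0.eventually (eventually_lt_nhds hs)).exists
  have heq : linearInterpTrunc t w N =ᶠ[𝓝 s] linearInterp t w :=
    eventually_of_mem (Ioi_mem_nhds hN) fun s' hs' => (linearInterp_eq ht (le_of_lt hs')).symm
  exact ((continuous_linearInterpTrunc t w N).continuousAt.congr heq).continuousWithinAt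

end Interpolation

section RadialCone

variable {V : Type*} [AddCommGroup V] [Module ℝ V] {C : Set V} {p : V}

def radialCone (C : Set V) (p : V) : Set V := {w | ∃ t : ℝ, 0 < t ∧ p + t • w ∈ C}

lemma sub_mem_radialCone {q : V} (hq : q ∈ C) : q - p ∈ radialCone C p :=
  ⟨1, one_pos, by simpa using hq⟩

lemma smul_mem_radialCone {w : V} (hw : w ∈ radialCone C p) {r : ℝ} (hr : 0 < r) :
    r • w ∈ radialCone C p := by
  obtain ⟨t, ht, htC⟩ := hw
  exact ⟨t / r, div_pos ht hr, by rwa [smul_smul, div_mul_cancel₀ _ hr.ne']⟩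

lemma add_smul_mem_of_le (hC : Convex ℝ C) (hp : p ∈ C) {w : V} {t s : ℝ}
    (ht : p + t • w ∈ C) (hs : 0 ≤ s) (hst : s ≤ t) : p + s • w ∈ C := by
  rcases hs.eq_or_lt with rfl | hs
  · simpa using hp
  have ht0 : 0 < t := hs.trans_le hst
  simpa [smul_smul, div_mul_cancel₀ _ ht0.ne'] using
    hC.add_smul_mem hp ht ⟨div_nonneg hs.le ht0.le, (div_le_one ht0).2 hst⟩ (t := s / t)

lemma convex_radialCone (hC : Convex ℝ C) (hp : p ∈ C) : Convex ℝ (radialCone C p) := by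
  rintro w₁ ⟨t₁, ht₁, h₁⟩ w₂ ⟨t₂, ht₂, h₂⟩ a b ha hb hab
  refine ⟨min t₁ t₂, lt_min ht₁ ht₂, ?_⟩
  have hcombo : p + min t₁ t₂ • (a • w₁ + b • w₂) =
      a • (p + min t₁ t₂ • w₁) + b • (p + min t₁ t₂ • w₂) := by
    obtain rfl : b = 1 - a := by linarith
    module
  rw [hcombo]
  exact hC (add_smul_mem_of_le hC hp h₁ (lt_min ht₁ ht₂).le (min_le_left _ _))
    (add_smul_mem_of_le hC hp h₂ (lt_min ht₁ ht₂).le (min_le_right _ _)) ha hb hab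

variable [TopologicalSpace V]

lemma mem_closure_radialCone [IsTopologicalAddGroup V] [ContinuousSMul ℝ V]
    [LocallyConvexSpace ℝ V] (hC : Convex ℝ C) (hp : p ∈ C) {v : V}
    (h : ∀ θ : V →L[ℝ] ℝ, (∀ q ∈ C, θ p ≤ θ q) → 0 ≤ θ v) : v ∈ closure (radialCone C p) := by
  by_contra hv
  obtain ⟨f, u, hfv, hf⟩ :=
    geometric_hahn_banach_point_closed (convex_radialCone hC hp).closure isClosed_closure hv
  have h0 : (0 : V) ∈ radialCone C p := by simpa using sub_mem_radialCone (p := p) hp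
  have hu : u < 0 := by simpa using hf 0 (subset_closure h0)
  have hf_nonneg : ∀ w ∈ radialCone C p, 0 ≤ f w := by
    intro w hw
    by_contra! hfw
    have := hf _ (subset_closure (smul_mem_radialCone hw (div_pos_of_neg_of_neg hu hfw)))
    simp [div_mul_cancel₀ _ hfw.ne] at this
  have hmin : ∀ q ∈ C, f p ≤ f q := fun q hq => by
    simpa using hf_nonneg _ (sub_mem_radialCone hq)
  linarith [h f hmin]

lemma nonneg_of_tendsto_inv_smul_sub {c : ℝ → V} (hcC : ∀ t > 0, c t ∈ C) {v : V}
    (hc : Tendsto (fun t : ℝ => t⁻¹ • (c t - p)) (𝓝[>] 0) (𝓝 v)) (θ : V →L[ℝ] ℝ)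
    (hθ : ∀ q ∈ C, θ p ≤ θ q) : 0 ≤ θ v := by
  refine ge_of_tendsto ((θ.continuous.tendsto v).comp hc) ?_
  filter_upwards [self_mem_nhdsWithin] with t (ht : 0 < t)
  simpa [map_smul, map_sub] using
    mul_nonneg (inv_nonneg.2 ht.le) (sub_nonneg.2 (hθ _ (hcC t ht)))

theorem exists_curve_of_tendsto [IsTopologicalAddGroup V] [ContinuousSMul ℝ V]
    [LocallyConvexSpace ℝ V] (hC : Convex ℝ C) (hp : p ∈ C) {w : ℕ → V}
    (hwC : ∀ n, w n ∈ radialCone C p) {v : V} (hw : Tendsto w atTop (𝓝 v)) :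
    ∃ c : ℝ → V, ContinuousOn c (Ici 0) ∧ (∀ t ∈ Ici (0:ℝ), c t ∈ C) ∧ c 0 = p ∧
      Tendsto (fun t : ℝ => t⁻¹ • (c t - p)) (𝓝[>] 0) (𝓝 v) := by
  choose τ hτ hτC using hwC
  obtain ⟨t, ht, htτ, h0⟩ :=
    exists_strictAnti_tendsto_zero_le (a := fun n => min (τ n) (τ (n + 1)))
      fun n => lt_min (hτ n) (hτ (n + 1))
  have ht0 : 0 < t 0 := pos_of_strictAnti_of_tendsto_zero ht h0 0
  have hγ : Tendsto (linearInterp t w) (𝓝[>] 0) (𝓝 v) := tendsto_linearInterp ht h0 hw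
  have hmin_cont : Continuous fun s : ℝ => min s (t 0) := by fun_prop
  -- clamping at `t 0` keeps the curve in `C`: `p + s • w 0` may leave `C` for large `s`
  refine ⟨fun s => p + min s (t 0) • linearInterp t w s, ?_, ?_, by simp [ht0.le], ?_⟩
  · intro s (hs : 0 ≤ s)
    rcases hs.eq_or_lt with rfl | hs
    · rw [← continuousWithinAt_Ioi_iff_Ici, ContinuousWithinAt]
      have hmin : Tendsto (fun s => min s (t 0)) (𝓝[>] 0) (𝓝 0) := by
        simpa [ht0.le] using (hmin_cont.tendsto 0).mono_left nhdsWithin_le_nhds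
      simpa [ht0.le] using tendsto_const_nhds.add (hmin.smul hγ)
    · exact (continuousAt_const.add (hmin_cont.continuousAt.smul
        ((continuousOn_linearInterp ht h0).continuousAt (Ioi_mem_nhds hs)))).continuousWithinAt
  · intro s (hs : 0 ≤ s)
    dsimp only
    rcases le_or_gt (t 0) s with hts | hts
    · rw [min_eq_right hts, linearInterp_of_le ht hts]
      exact add_smul_mem_of_le hC hp (hτC 0) ht0.le ((htτ 0).trans (min_le_left _ _))
    rcases hs.eq_or_lt with rfl | hs
    · simpa [ht0.le] using hp
    obtain ⟨n, h₁, h₂⟩ := exists_le_le_of_tendsto_zero h0 hs hts.le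
    have hslice : Convex ℝ {u | p + s • u ∈ C} :=
      (hC.translate_preimage_right p).smul_preimage s
    rw [min_eq_left hts.le]
    exact hslice.segment_subset
      (add_smul_mem_of_le hC hp (hτC _) hs.le (h₂.trans ((htτ n).trans (min_le_right _ _))))
      (add_smul_mem_of_le hC hp (hτC _) hs.le (h₂.trans ((htτ n).trans (min_le_left _ _))))
      (linearInterp_mem_segment ht h₁ h₂)
  · refine hγ.congr' ?_
    filter_upwards [Ioo_mem_nhdsGT ht0] with s ⟨hs, hst⟩
    rw [min_eq_left hst.le, add_sub_cancel_left, inv_smul_smul₀ hs.ne']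

end RadialCone

theorem stmt18_general {V : Type*} [AddCommGroup V] [Module ℝ V] [TopologicalSpace V]
    [IsTopologicalAddGroup V] [ContinuousSMul ℝ V] [LocallyConvexSpace ℝ V]
    (C : Set V) (hconv : Convex ℝ C) (p : V) (hp : p ∈ C) (v : V)
    (X : Set V) (hvX : v ∈ X)
    (N : V → ℝ)
    (hNtop : ∀ x ∈ X, ∀ S : Set V,
      S ∈ 𝓝[X] x ↔ ∃ ε > 0, {y ∈ X | N (y - x) < ε} ⊆ S)
    (hcone : ∃ O : Set V, IsOpen O ∧ v ∈ O ∧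
      {w : V | ∃ t : ℝ, 0 < t ∧ p + t • w ∈ C} ∩ O ⊆ X) :
    (∃ c : ℝ → V, ContinuousOn c (Ici 0) ∧ (∀ t ∈ Ici (0:ℝ), c t ∈ C) ∧ c 0 = p ∧
        Tendsto (fun t : ℝ => t⁻¹ • (c t - p)) (𝓝[>] 0) (𝓝 v)) ↔
      ∀ θ : V →L[ℝ] ℝ, (∀ q ∈ C, θ p ≤ θ q) → 0 ≤ θ v := by
  refine ⟨fun ⟨c, _, hcC, _, hc⟩ => nonneg_of_tendsto_inv_smul_sub (fun t ht => hcC t ht.le) hc,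
    fun h => ?_⟩
  obtain ⟨O, hO, hvO, hOX⟩ := hcone
  have hv : v ∈ closure (radialCone C p ∩ O) := by
    rw [inter_comm]
    exact hO.inter_closure ⟨hvO, mem_closure_radialCone hconv hp h⟩
  have : (𝓝[X] v).IsCountablyGenerated :=
    isCountablyGenerated_of_forall_mem_iff (B := fun ε => {y ∈ X | N (y - v) < ε})
      (fun _ _ hεδ _ hy => ⟨hy.1, hy.2.trans_le hεδ⟩) (hNtop v hvX)
  obtain ⟨w, hw, hwv⟩ := exists_seq_tendsto_of_mem_closure hv hOX
  exact exists_curve_of_tendsto hconv hp (fun n => (hw n).1) hwv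

/-- Let `C` be a convex subset of a locally convex space `V`, `p ∈ C`,
`v ∈ V`. Suppose `v` and `C` lie in a subset `X` whose subspace topology is induced
by a norm `N` (on differences), and `X` contains the intersection of the tangent cone
of `C` at `p` with an open neighborhood of `v`. Then a curve in `C` starting at `p`
with right derivative `v` exists iff `θ v ≥ 0` for every continuous linear functional
`θ` attaining its minimum over `C` at `p`. -/
theorem stmt18 {V : Type*} [AddCommGroup V] [Module ℝ V] [TopologicalSpace V]
    [IsTopologicalAddGroup V] [ContinuousSMul ℝ V] [LocallyConvexSpace ℝ V]
    (C : Set V) (hconv : Convex ℝ C) (p : V) (hp : p ∈ C) (v : V)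
    (X : Set V) (hvX : v ∈ X) (hCX : C ⊆ X)
    (N : V → ℝ)
    (hN0 : ∀ w, 0 ≤ N w)
    (hNdef : ∀ x ∈ X, ∀ y ∈ X, (N (x - y) = 0 ↔ x = y))
    (hNhom : ∀ (c : ℝ) (w : V), N (c • w) = |c| * N w)
    (hNtri : ∀ w u : V, N (w + u) ≤ N w + N u)
    (hNtop : ∀ x ∈ X, ∀ S : Set V,
      S ∈ 𝓝[X] x ↔ ∃ ε > 0, {y ∈ X | N (y - x) < ε} ⊆ S)
    (hcone : ∃ O : Set V, IsOpen O ∧ v ∈ O ∧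
      {w : V | ∃ t : ℝ, 0 < t ∧ p + t • w ∈ C} ∩ O ⊆ X) :
    (∃ c : ℝ → V, ContinuousOn c (Ici 0) ∧ (∀ t ∈ Ici (0:ℝ), c t ∈ C) ∧ c 0 = p ∧
        Tendsto (fun t : ℝ => t⁻¹ • (c t - p)) (𝓝[>] 0) (𝓝 v)) ↔
      ∀ θ : V →L[ℝ] ℝ, (∀ q ∈ C, θ p ≤ θ q) → 0 ≤ θ v :=
  stmt18_general C hconv p hp v X hvX N hNtop hcone
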